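/- Let σ : A* → A* be a substitution prolongable on a, φ : A* → B* a coding, y = σ^∞(a), and suppose x = φ(y) is uniformly recurrent and non-periodic with all letters of A occurring in y. Then there is a uniform bound, independent of u, on the number of factors v of y with φ(v) = u, for every factor u of x; explicitly the bound p_σ(K+1)·|σ|·Q_σ·(K+1)² works, where K is a linear recurrence constant of x, p_σ(n) is the number of length-n words in the language of σ, and Q_σ satisfies |σ^k| ≤ Q_σ⟨σ^k⟩ for all k. -/

import Mathlib

/-- The factor of the sequence `x` starting at position `i` of length `n`. -/
def seqWord {A : Type*} (x : ℕ → A) (i n : ℕ) : List A :=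
  (List.range n).map (fun k => x (i + k))

/-- The word `u` occurs in the sequence `x` at position `i`. -/
def occursAt {A : Type*} (x : ℕ → A) (u : List A) (i : ℕ) : Prop :=
  seqWord x i u.length = u

/-- `u` is a factor of the sequence `x`. -/
def IsFactor {A : Type*} (x : ℕ → A) (u : List A) : Prop :=
  ∃ i, occursAt x u i

/-- `u` is a prefix of the sequence `x`. -/
def IsPrefixSeq {A : Type*} (u : List A) (x : ℕ → A) : Prop :=
  occursAt x u 0

/-- `x` is uniformly recurrent: every factor occurs in every sufficiently long window. -/
def UnifRec {A : Type*} (x : ℕ → A) : Prop :=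
  ∀ u : List A, IsFactor x u → ∃ C, ∀ i, ∃ j, i ≤ j ∧ j < i + C ∧ occursAt x u j

/-- `w` is a return word to `u` in `x`: the factor between two consecutive occurrences of `u`. -/
def IsReturnWord {A : Type*} (x : ℕ → A) (u w : List A) : Prop :=
  ∃ i j, i < j ∧ occursAt x u i ∧ occursAt x u j ∧
    (∀ k, i < k → k < j → ¬ occursAt x u k) ∧ w = seqWord x i (j - i)

/-- Apply a morphism (given on letters) to a word, by concatenation. -/
def morphApply {I A : Type*} (θ : I → List A) (l : List I) : List A :=
  (l.map θ).flatten

/-- Iterate an endomorphism `σ` of the free monoid `n` times on a word. -/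
def morphIter {A : Type*} (σ : A → List A) : ℕ → List A → List A
  | 0, l => l
  | n + 1, l => morphApply σ (morphIter σ n l)

/-- `x` is ultimately periodic. -/
def UltPeriodic {A : Type*} (x : ℕ → A) : Prop :=
  ∃ p > 0, ∃ N, ∀ n ≥ N, x (n + p) = x n

/-- `x` is linearly recurrent with constant `K`: it is uniformly recurrent and two
successive occurrences of any nonempty factor `u` differ by at most `K * |u|`. -/
def LinRec {A : Type*} (K : ℕ) (x : ℕ → A) : Prop :=
  UnifRec x ∧ ∀ u : List A, u ≠ [] → IsFactor x u →
    ∀ i, occursAt x u i → ∃ j, i < j ∧ j ≤ i + K * u.length ∧ occursAt x u j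

/-- `σ` is prolongable on the letter `a`. -/
def Prolongable {A : Type*} (σ : A → List A) (a : A) : Prop :=
  (∃ t, σ a = a :: t ∧ t ≠ []) ∧
    Filter.Tendsto (fun n => (morphIter σ n [a]).length) Filter.atTop Filter.atTop

/-- `σ` is growing: the image of each letter has length tending to infinity. -/
def Growing {A : Type*} (σ : A → List A) : Prop :=
  ∀ a, Filter.Tendsto (fun n => (morphIter σ n [a]).length) Filter.atTop Filter.atTop

/-- `σ` is primitive: some power sends every letter to a word containing every letter. -/
def Primitive {A : Type*} (σ : A → List A) : Prop :=
  ∃ n > 0, ∀ a b : A, b ∈ morphIter σ n [a]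

/-- `x` is the fixed point `σ^∞(a)` of `σ`, prolongable on `a`. -/
def IsFixedPointOf {A : Type*} (σ : A → List A) (a : A) (x : ℕ → A) : Prop :=
  x 0 = a ∧ ∀ n, IsPrefixSeq (morphIter σ n [a]) x

/-- The word `w` belongs to the language of the endomorphism `σ`. -/
def InLang {A : Type*} (σ : A → List A) (w : List A) : Prop :=
  ∃ a n, w <:+: morphIter σ n [a]

/-- The word `u` occurs at position `i` in the word `w`. -/
def listOccursAt {A : Type*} (w u : List A) (i : ℕ) : Prop :=
  i + u.length ≤ w.length ∧ (w.drop i).take u.length = u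

/-- `|σ^k|`: the maximal length of the image of a letter under `σ^k`. -/
def maxLen {A : Type*} [Fintype A] [Nonempty A] (σ : A → List A) (k : ℕ) : ℕ :=
  Finset.univ.sup' Finset.univ_nonempty (fun a => (morphIter σ k [a]).length)

/-- `⟨σ^k⟩`: the minimal length of the image of a letter under `σ^k`. -/
def minLen {A : Type*} [Fintype A] [Nonempty A] (σ : A → List A) (k : ℕ) : ℕ :=
  Finset.univ.inf' Finset.univ_nonempty (fun a => (morphIter σ k [a]).length)

/-- `(R, θ, z)` is the derived-sequence data of `x` on the prefix `u`: `θ 0, …, θ (R-1)`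
enumerate the return words to `u` in order of first appearance in `x`, `z` is the derived
sequence, i.e. the coding of the decomposition of `x` into return words to `u`,
so that `Θ_{x,u}(z) = x`. -/
def IsDerivedSeq {A : Type*} (x : ℕ → A) (u : List A) (R : ℕ)
    (θ : ℕ → List A) (z : ℕ → ℕ) : Prop :=
  (∀ i < R, IsReturnWord x u (θ i)) ∧
  (∀ w, IsReturnWord x u w → ∃ i < R, θ i = w) ∧
  (∀ i < R, ∀ j < R, i < j →
      sInf {k | occursAt x (θ i) k} < sInf {k | occursAt x (θ j) k}) ∧
  (∀ k, z k < R) ∧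
  (∀ n, IsPrefixSeq (morphApply θ (seqWord z 0 n)) x)

/-!
Let `n = |u|`. Take `k = 0` if `n ≤ K + 1`, and otherwise the least `k` with `⟨σ^k⟩ ≥ n`, so
that `|σ^k| ≤ |σ| ⟨σ^(k-1)⟩ Q_σ < |σ| Q_σ n`. Since `y = σ^k(y)` is cut into blocks of length
at least `⟨σ^k⟩`, every preimage `v` of `u` is read in `σ^k(w)`, for some factor `w` of `y` of
length `K + 1`, at an offset `o < |σ^k|`. Two preimages read in the same `σ^k(w)` at offsets
`o < o'` give occurrences of `u` in `x` at distance `δ = o' - o`, and then `n ≤ K (δ + 1)`: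
otherwise the `δ`-periodic word `x[q, q + n + δ)` would, by linear recurrence, contain every
factor of length `δ + 1` of `x`, so `x` would have at most `δ` of them and be ultimately periodic
by the Morse–Hedlund theorem. Hence the offsets for a fixed `w` are `(n - K)/K`-separated in
`[0, |σ| Q_σ n)`, and there are at most `|σ| Q_σ (K + 1)²` of them.
-/

section Words

variable {A B : Type*}

@[simp] theorem seqWord_length (x : ℕ → A) (i n : ℕ) : (seqWord x i n).length = n := by
  simp [seqWord]

theorem seqWord_eq_seqWord_iff {x z : ℕ → A} {i j n : ℕ} :
    seqWord x i n = seqWord z j n ↔ ∀ t < n, x (i + t) = z (j + t) := by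
  simp [seqWord, List.map_inj_left]

theorem seqWord_add (x : ℕ → A) (i m l : ℕ) :
    seqWord x i (m + l) = seqWord x i m ++ seqWord x (i + m) l := by
  simp only [seqWord, List.range_add, List.map_append, List.map_map]
  congr 1
  exact List.map_congr_left fun k _ => by simp [Nat.add_assoc]

theorem seqWord_one (x : ℕ → A) (i : ℕ) : seqWord x i 1 = [x i] := by
  simp [seqWord]

theorem seqWord_take (x : ℕ → A) (i n m : ℕ) :
    (seqWord x i n).take m = seqWord x i (min m n) := by
  simp [seqWord, ← List.map_take, List.take_range]

theorem seqWord_map (φ : A → B) (y : ℕ → A) (i n : ℕ) :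
    (seqWord y i n).map φ = seqWord (fun t => φ (y t)) i n := by
  simp [seqWord]

theorem occursAt_seqWord (x : ℕ → A) (i n : ℕ) : occursAt x (seqWord x i n) i := by
  simp [occursAt]

theorem occursAt_append_iff {x : ℕ → A} {w₁ w₂ : List A} {i : ℕ} :
    occursAt x (w₁ ++ w₂) i ↔ occursAt x w₁ i ∧ occursAt x w₂ (i + w₁.length) := by
  rw [occursAt, List.length_append, seqWord_add]
  exact ⟨fun h => List.append_inj h (by simp), fun ⟨h₁, h₂⟩ => congrArg₂ (· ++ ·) h₁ h₂⟩

theorem occursAt.take_drop {x : ℕ → A} {w : List A} {p : ℕ} (h : occursAt x w p)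
    {o n : ℕ} (hn : o + n ≤ w.length) : occursAt x ((w.drop o).take n) (p + o) := by
  have hlen : ((w.drop o).take n).length = n := by simp; omega
  unfold occursAt at h ⊢
  rw [hlen]
  conv_rhs => rw [← h, ← Nat.add_sub_cancel' (show o ≤ w.length by omega), seqWord_add x p o]
  rw [List.drop_left' (seqWord_length _ _ _), seqWord_take]
  congr 1
  omega

theorem occursAt.map {y : ℕ → A} {v : List A} {i : ℕ} (h : occursAt y v i) (φ : A → B) :
    occursAt (fun t => φ (y t)) (v.map φ) i := by
  rw [occursAt, List.length_map, ← seqWord_map, h]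

theorem apply_add_eq_apply_add_mod {x : ℕ → A} {p δ n : ℕ}
    (hper : ∀ s < n, x (p + s + δ) = x (p + s)) : ∀ s < n + δ, x (p + s) = x (p + s % δ) := by
  rcases Nat.eq_zero_or_pos δ with rfl | hδ
  · simp
  intro s
  induction s using Nat.strong_induction_on with
  | _ s ih =>
    intro hs
    rcases Nat.lt_or_ge s δ with h | h
    · rw [Nat.mod_eq_of_lt h]
    · rw [Nat.mod_eq_sub_mod h, ← ih (s - δ) (by omega) (by omega), ← hper (s - δ) (by omega)]
      congr 1
      omega

end Words

section MorseHedlund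

variable {A : Type*}

def factorsOfLength (x : ℕ → A) (l : ℕ) : Set (List A) :=
  Set.range fun i => seqWord x i l

theorem factorsOfLength_finite [Finite A] (x : ℕ → A) (l : ℕ) :
    (factorsOfLength x l).Finite :=
  (List.finite_length_eq A l).subset (by rintro _ ⟨i, rfl⟩; simp)

theorem ncard_factorsOfLength_zero (x : ℕ → A) : (factorsOfLength x 0).ncard = 1 := by
  rw [Set.ncard_eq_one]
  exact ⟨[], by ext w; simp [factorsOfLength, seqWord]⟩

theorem ultPeriodic_of_unique_extension [Finite A] {x : ℕ → A} {k : ℕ}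
    (hext : ∀ i j, seqWord x i k = seqWord x j k → x (i + k) = x (j + k)) : UltPeriodic x := by
  have := (factorsOfLength_finite x k).to_subtype
  obtain ⟨i, j, hij, heq⟩ := Finite.exists_ne_map_eq_of_infinite
    fun i => (⟨seqWord x i k, i, rfl⟩ : factorsOfLength x k)
  wlog hlt : i < j generalizing i j
  · exact this j i hij.symm heq.symm (by omega)
  have hshift : ∀ s, seqWord x (i + s) k = seqWord x (j + s) k := by
    intro s
    induction s with
    | zero => exact congrArg Subtype.val heq
    | succ s ih =>
      have hnext := hext _ _ ih
      rw [seqWord_eq_seqWord_iff] at ih ⊢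
      intro t ht
      rw [show i + (s + 1) + t = i + s + (t + 1) by omega,
        show j + (s + 1) + t = j + s + (t + 1) by omega]
      obtain h | h : t + 1 < k ∨ t + 1 = k := by omega
      · exact ih _ h
      · rwa [h]
  refine ⟨j - i, by omega, i + k, fun m hm => ?_⟩
  obtain ⟨s, rfl⟩ : ∃ s, m = i + s + k := ⟨m - k - i, by omega⟩
  rw [show i + s + k + (j - i) = j + s + k by omega]
  exact (hext _ _ (hshift s)).symm

theorem unique_extension_of_ncard_le [Finite A] {x : ℕ → A} {k : ℕ}
    (hk : (factorsOfLength x (k + 1)).ncard ≤ (factorsOfLength x k).ncard) :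
    ∀ i j, seqWord x i k = seqWord x j k → x (i + k) = x (j + k) := by
  have himage : List.take k '' factorsOfLength x (k + 1) = factorsOfLength x k := by
    ext w
    simp [factorsOfLength, seqWord_take]
  have hinj : Set.InjOn (List.take k) (factorsOfLength x (k + 1)) :=
    Set.injOn_of_ncard_image_eq (le_antisymm (Set.ncard_image_le (factorsOfLength_finite x _))
      (himage ▸ hk)) (factorsOfLength_finite x _)
  intro i j h
  have hij := hinj ⟨i, rfl⟩ ⟨j, rfl⟩ (by simpa [seqWord_take] using h)
  exact seqWord_eq_seqWord_iff.1 hij k (by omega)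

theorem exists_ncard_factorsOfLength_succ_le [Finite A] {x : ℕ → A} {m : ℕ}
    (hm : (factorsOfLength x m).ncard ≤ m) :
    ∃ k, (factorsOfLength x (k + 1)).ncard ≤ (factorsOfLength x k).ncard := by
  by_contra! hgrow
  have hlower : ∀ k, k + 1 ≤ (factorsOfLength x k).ncard := by
    intro k
    induction k with
    | zero => simp [ncard_factorsOfLength_zero]
    | succ k ih => have := hgrow k; omega
  have := hlower m
  omega

theorem ultPeriodic_of_ncard_factorsOfLength_le [Finite A] {x : ℕ → A} {m : ℕ}
    (hm : (factorsOfLength x m).ncard ≤ m) : UltPeriodic x :=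
  let ⟨_, hk⟩ := exists_ncard_factorsOfLength_succ_le hm
  ultPeriodic_of_unique_extension (unique_extension_of_ncard_le hk)

end MorseHedlund

namespace LinRec

variable {B : Type*} {K : ℕ} {x : ℕ → B}

theorem one_le (hK : LinRec K x) : 1 ≤ K := by
  obtain ⟨j, hj0, hjK, -⟩ := hK.2 [x 0] (List.cons_ne_nil _ _) ⟨0, seqWord_one x 0⟩ 0
    (seqWord_one x 0)
  simp only [List.length_singleton, Nat.mul_one, Nat.zero_add] at hjK
  omega

theorem exists_occursAt_in_window (hK : LinRec K x) {w : List B} (hw : w ≠ []) {i : ℕ}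
    (h : occursAt x w i) {α : ℕ} (hα : i ≤ α) :
    ∃ j, α ≤ j ∧ j ≤ α + K * w.length ∧ occursAt x w j := by
  induction α, hα using Nat.le_induction with
  | base => exact ⟨i, le_rfl, by omega, h⟩
  | succ α _ ih =>
    obtain ⟨j, hαj, hj, hocc⟩ := ih
    by_cases hj' : α + 1 ≤ j
    · exact ⟨j, hj', by omega, hocc⟩
    · obtain ⟨j', hjj', hj', hocc'⟩ := hK.2 w hw ⟨j, hocc⟩ j hocc
      exact ⟨j', by omega, by omega, hocc'⟩

theorem factorsOfLength_subset_image_of_occursAt_add (hK : LinRec K x) {u : List B} {q δ : ℕ}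
    (hδ : 0 < δ) (h₁ : occursAt x u q) (h₂ : occursAt x u (q + δ))
    (hlong : K * (δ + 1) < u.length) :
    factorsOfLength x (δ + 1) ⊆ (fun r => seqWord x (q + r) (δ + 1)) '' Set.Iio δ := by
  set n := u.length
  have hm : δ + 1 ≤ n := (Nat.le_mul_of_pos_left _ hK.one_le).trans hlong.le
  have hper : ∀ s < n, x (q + s + δ) = x (q + s) := fun s hs => by
    rw [Nat.add_right_comm]
    exact seqWord_eq_seqWord_iff.1 (h₂.trans h₁.symm) s hs
  rintro _ ⟨i, rfl⟩
  obtain ⟨β, hiβ, -, hβ⟩ := hK.exists_occursAt_in_window (w := seqWord x q (n + δ))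
    (List.ne_nil_of_length_pos (by simp; omega)) (occursAt_seqWord x q _) (le_max_right i q)
  obtain ⟨j, hβj, hj, hj'⟩ := hK.exists_occursAt_in_window (w := seqWord x i (δ + 1))
    (List.ne_nil_of_length_pos (by simp)) (occursAt_seqWord x i _) ((le_max_left i q).trans hiβ)
  unfold occursAt at hβ hj'
  simp only [seqWord_length] at hβ hj hj'
  have hr := Nat.mod_lt (j - β) hδ
  refine ⟨(j - β) % δ, hr, ?_⟩
  show seqWord x (q + (j - β) % δ) (δ + 1) = seqWord x i (δ + 1)
  rw [← hj', seqWord_eq_seqWord_iff]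
  intro t ht
  have hmod := apply_add_eq_apply_add_mod hper
  calc x (q + (j - β) % δ + t) = x (q + ((j - β) % δ + t) % δ) := by
        rw [Nat.add_assoc]; exact hmod _ (by omega)
    _ = x (q + (j - β + t)) := by rw [Nat.mod_add_mod, ← hmod _ (by omega)]
    _ = x (β + (j - β + t)) := (seqWord_eq_seqWord_iff.1 hβ _ (by omega)).symm
    _ = x (j + t) := by congr 1; omega

theorem length_le_of_occursAt_add [Finite B] (hK : LinRec K x) (hnp : ¬ UltPeriodic x)
    {u : List B} {q δ : ℕ} (hδ : 0 < δ) (h₁ : occursAt x u q) (h₂ : occursAt x u (q + δ)) :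
    u.length ≤ K * (δ + 1) := by
  by_contra! hlong
  refine hnp (ultPeriodic_of_ncard_factorsOfLength_le (m := δ + 1) ?_)
  calc (factorsOfLength x (δ + 1)).ncard
      ≤ ((fun r => seqWord x (q + r) (δ + 1)) '' Set.Iio δ).ncard :=
        Set.ncard_le_ncard (hK.factorsOfLength_subset_image_of_occursAt_add hδ h₁ h₂ hlong)
          ((Set.finite_Iio δ).image _)
    _ ≤ (Set.Iio δ).ncard := Set.ncard_image_le (Set.finite_Iio δ)
    _ ≤ δ + 1 := by simp

end LinRec

section Substitution

variable {A : Type*} (σ : A → List A)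

@[simp] theorem morphIter_nil (k : ℕ) : morphIter σ k [] = [] := by
  induction k with
  | zero => rfl
  | succ k ih => simp [morphIter, ih, morphApply]

theorem morphIter_append (k : ℕ) (l₁ l₂ : List A) :
    morphIter σ k (l₁ ++ l₂) = morphIter σ k l₁ ++ morphIter σ k l₂ := by
  induction k with
  | zero => rfl
  | succ k ih => simp [morphIter, ih, morphApply]

theorem morphIter_add (m k : ℕ) (l : List A) :
    morphIter σ (m + k) l = morphIter σ k (morphIter σ m l) := by
  induction k with
  | zero => rfl
  | succ k ih => exact congrArg (morphApply σ) ih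

theorem morphIter_one_singleton (b : A) : morphIter σ 1 [b] = σ b := by
  simp [morphIter, morphApply]

variable [Fintype A] [Nonempty A]

theorem length_morphIter_singleton_le_maxLen (k : ℕ) (b : A) :
    (morphIter σ k [b]).length ≤ maxLen σ k :=
  Finset.le_sup' (fun a => (morphIter σ k [a]).length) (Finset.mem_univ b)

theorem minLen_le_length_morphIter_singleton (k : ℕ) (b : A) :
    minLen σ k ≤ (morphIter σ k [b]).length :=
  Finset.inf'_le (fun a => (morphIter σ k [a]).length) (Finset.mem_univ b)

theorem length_morphIter_le (k : ℕ) (l : List A) :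
    (morphIter σ k l).length ≤ maxLen σ k * l.length := by
  induction l with
  | nil => simp
  | cons b l ih =>
    rw [← List.singleton_append, morphIter_append]
    simp only [List.length_append, List.length_singleton, Nat.mul_add, Nat.mul_one]
    have := length_morphIter_singleton_le_maxLen σ k b
    omega

theorem minLen_mul_le_length_morphIter (k : ℕ) (l : List A) :
    minLen σ k * l.length ≤ (morphIter σ k l).length := by
  induction l with
  | nil => simp
  | cons b l ih =>
    rw [← List.singleton_append, morphIter_append]
    simp only [List.length_append, List.length_singleton, Nat.mul_add, Nat.mul_one]
    have := minLen_le_length_morphIter_singleton σ k b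
    omega

@[simp] theorem maxLen_zero : maxLen σ 0 = 1 :=
  Finset.sup'_const _ _

@[simp] theorem minLen_zero : minLen σ 0 = 1 :=
  Finset.inf'_const _ _

theorem maxLen_succ_le (k : ℕ) : maxLen σ (k + 1) ≤ maxLen σ k * maxLen σ 1 := by
  refine Finset.sup'_le _ _ fun b _ => ?_
  rw [Nat.add_comm, morphIter_add, morphIter_one_singleton]
  exact (length_morphIter_le σ k _).trans (Nat.mul_le_mul_left _ <|
    morphIter_one_singleton σ b ▸ length_morphIter_singleton_le_maxLen σ 1 b)

theorem Prolongable.one_le_maxLen_one {a : A} (hprol : Prolongable σ a) : 1 ≤ maxLen σ 1 := by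
  obtain ⟨t, hat, -⟩ := hprol.1
  have := length_morphIter_singleton_le_maxLen σ 1 a
  rw [morphIter_one_singleton, hat, List.length_cons] at this
  omega

theorem Growing.exists_le_minLen {σ : A → List A} (hgrow : Growing σ) (N : ℕ) :
    ∃ k, N ≤ minLen σ k := by
  have h : ∀ᶠ k in Filter.atTop, ∀ b : A, N ≤ (morphIter σ k [b]).length :=
    Filter.eventually_all.2 fun b => (hgrow b).eventually_ge_atTop N
  obtain ⟨k, hk⟩ := h.exists
  exact ⟨k, Finset.le_inf' _ _ fun b _ => hk b⟩

theorem Growing.exists_le_minLen_and_maxLen_le {σ : A → List A} (hgrow : Growing σ) {Q : ℕ}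
    (hQ : ∀ k, maxLen σ k ≤ Q * minLen σ k) {n : ℕ} (hn : 2 ≤ n) :
    ∃ k, n ≤ minLen σ k ∧ maxLen σ k ≤ maxLen σ 1 * Q * (n - 1) := by
  have hex := hgrow.exists_le_minLen n
  refine ⟨Nat.find hex, Nat.find_spec hex, ?_⟩
  obtain ⟨k, hk⟩ : ∃ k, Nat.find hex = k + 1 :=
    Nat.exists_eq_succ_of_ne_zero fun h => by simpa [h] using (Nat.find_spec hex).trans_lt' hn
  have hprev : minLen σ k ≤ n - 1 := by
    have := Nat.find_min hex (show k < Nat.find hex by omega)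
    omega
  rw [hk]
  calc maxLen σ (k + 1) ≤ maxLen σ k * maxLen σ 1 := maxLen_succ_le σ k
    _ ≤ Q * (n - 1) * maxLen σ 1 := Nat.mul_le_mul_right _ <|
        (hQ k).trans (Nat.mul_le_mul_left _ hprev)
    _ = maxLen σ 1 * Q * (n - 1) := by ring

end Substitution

theorem exists_le_lt_succ_of_strictMono {s : ℕ → ℕ} (hs : StrictMono s) (h0 : s 0 = 0) (i : ℕ) :
    ∃ j, s j ≤ i ∧ i < s (j + 1) := by
  induction i with
  | zero => exact ⟨0, h0.le, by simpa [h0] using hs Nat.zero_lt_one⟩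
  | succ i ih =>
    obtain ⟨j, hj, hij⟩ := ih
    by_cases h : i + 1 < s (j + 1)
    · exact ⟨j, by omega, h⟩
    · exact ⟨j + 1, by omega, by have := hs (Nat.lt_add_one (j + 1)); omega⟩

section FixedPoint

variable {A : Type*} {σ : A → List A} {a : A} {y : ℕ → A}

theorem IsFixedPointOf.exists_morphIter_eq_seqWord_append (hy : IsFixedPointOf σ a y)
    (hprol : Prolongable σ a) (m : ℕ) : ∃ N r, morphIter σ N [a] = seqWord y 0 m ++ r := by
  obtain ⟨N, hN⟩ := (hprol.2.eventually_ge_atTop m).exists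
  have hpre : seqWord y 0 (morphIter σ N [a]).length = morphIter σ N [a] := hy.2 N
  refine ⟨N, seqWord y m ((morphIter σ N [a]).length - m), ?_⟩
  conv_lhs => rw [← hpre, ← Nat.add_sub_cancel' hN, seqWord_add]
  simp

theorem IsFixedPointOf.occursAt_morphIter (hy : IsFixedPointOf σ a y) (hprol : Prolongable σ a)
    (k j t : ℕ) :
    occursAt y (morphIter σ k (seqWord y j t)) (morphIter σ k (seqWord y 0 j)).length := by
  obtain ⟨N, r, hN⟩ := hy.exists_morphIter_eq_seqWord_append hprol (j + t)
  have h : occursAt y (morphIter σ (N + k) [a]) 0 := hy.2 _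
  rw [morphIter_add, hN, seqWord_add, morphIter_append, morphIter_append, occursAt_append_iff,
    occursAt_append_iff] at h
  simpa using h.1.2

theorem IsFixedPointOf.inLang (hy : IsFixedPointOf σ a y) (hprol : Prolongable σ a)
    {v : List A} (hv : IsFactor y v) : InLang σ v := by
  obtain ⟨i, hi⟩ := hv
  obtain ⟨N, r, hN⟩ := hy.exists_morphIter_eq_seqWord_append hprol (i + v.length)
  refine ⟨a, N, seqWord y 0 i, r, ?_⟩
  rw [hN, seqWord_add, Nat.zero_add, show seqWord y i v.length = v from hi]

variable [Fintype A] [Nonempty A]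

theorem IsFixedPointOf.exists_window (hy : IsFixedPointOf σ a y) (hprol : Prolongable σ a)
    {K k n : ℕ} (hmin : 0 < minLen σ k) (hn : n ≤ K * minLen σ k + 1) (i : ℕ) :
    ∃ j, ∃ o < maxLen σ k,
      seqWord y i n = ((morphIter σ k (seqWord y j (K + 1))).drop o).take n := by
  set s : ℕ → ℕ := fun j => (morphIter σ k (seqWord y 0 j)).length
  have hs : ∀ j, s (j + 1) = s j + (morphIter σ k [y j]).length := by
    intro j
    simp [s, seqWord_add, seqWord_one, morphIter_append]
  have hsmono : StrictMono s := strictMono_nat_of_lt_succ fun j => by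
    have := minLen_le_length_morphIter_singleton σ k (y j)
    rw [hs]; omega
  obtain ⟨j, hj, hij⟩ := exists_le_lt_succ_of_strictMono hsmono (by simp [s, seqWord]) i
  rw [hs] at hij
  have hW : (morphIter σ k [y j]).length + K * minLen σ k ≤
      (morphIter σ k (seqWord y j (K + 1))).length := by
    have := minLen_mul_le_length_morphIter σ k (seqWord y (j + 1) K)
    rw [Nat.add_comm K 1, seqWord_add, seqWord_one, morphIter_append, List.length_append]
    simp only [seqWord_length] at this
    rw [Nat.mul_comm] at this
    omega
  have hmax := length_morphIter_singleton_le_maxLen σ k (y j)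
  refine ⟨j, i - s j, by omega, ?_⟩
  have hocc := (hy.occursAt_morphIter hprol k j (K + 1)).take_drop (o := i - s j) (n := n)
    (by omega)
  change occursAt y _ (s j + (i - s j)) at hocc
  rw [show s j + (i - s j) = i by omega, occursAt] at hocc
  rw [← hocc, List.length_take, List.length_drop]
  congr 1
  omega

end FixedPoint

theorem Finset.mul_card_sub_one_le_of_separated {T : Finset ℕ} {c D M : ℕ}
    (hT : ∀ o ∈ T, o ≤ M) (hsep : ∀ a ∈ T, ∀ b ∈ T, a < b → c ≤ D * (b - a)) :
    c * (T.card - 1) ≤ D * M := by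
  induction T using Finset.induction_on_max generalizing M with
  | empty => simp
  | insert b T hlt ih =>
    rcases T.eq_empty_or_nonempty with rfl | hne
    · simp
    have hm := T.max'_mem hne
    have hrest := ih (M := T.max' hne) (fun o ho => T.le_max' o ho)
      fun a ha b' hb' => hsep a (mem_insert_of_mem ha) b' (mem_insert_of_mem hb')
    have hlast := hsep _ (mem_insert_of_mem hm) b (mem_insert_self _ _) (hlt _ hm)
    have hb := hT b (mem_insert_self _ _)
    have hcard := hne.card_pos
    rw [card_insert_of_notMem fun h => lt_irrefl _ (hlt b h)]
    calc c * (T.card + 1 - 1) = c * (T.card - 1) + c := by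
          rw [Nat.add_sub_cancel, ← Nat.mul_succ]; congr; omega
      _ ≤ D * T.max' hne + D * (b - T.max' hne) := Nat.add_le_add hrest hlast
      _ = D * b := by rw [← Nat.mul_add]; congr 1; have := hlt _ hm; omega
      _ ≤ D * M := Nat.mul_le_mul_left _ hb

theorem Finset.card_le_mul_sq_of_separated {T : Finset ℕ} {K n L : ℕ} (hn : K + 2 ≤ n)
    (hT : ∀ o ∈ T, o < L * (n - 1)) (hsep : ∀ a ∈ T, ∀ b ∈ T, a < b → n ≤ K * (b - a + 1)) :
    T.card ≤ L * (K + 1) ^ 2 := by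
  have hbound := Finset.mul_card_sub_one_le_of_separated (c := n - K) (D := K)
    (fun o ho => (hT o ho).le) fun a ha b hb hab => by
      have := hsep a ha b hb hab
      rw [Nat.mul_add, Nat.mul_one] at this
      omega
  obtain ⟨E, rfl⟩ : ∃ E, n = K + 2 + E := ⟨n - (K + 2), by omega⟩
  rcases T.eq_empty_or_nonempty with rfl | ⟨o, ho⟩
  · simp
  have hL : 0 < L := Nat.pos_of_ne_zero fun h => by simpa [h] using hT o ho
  rw [show K + 2 + E - K = E + 2 by omega, show K + 2 + E - 1 = K + 1 + E by omega] at hbound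
  by_contra! hbig
  have hlow : L * (K + 1) ^ 2 ≤ T.card - 1 := by omega
  have hkey : K * (K + 1 + E) < (E + 2) * (K + 1) ^ 2 := by
    nlinarith [Nat.zero_le (E * K), Nat.zero_le (E * K ^ 2)]
  have := calc (E + 2) * (T.card - 1)
      ≤ L * (K * (K + 1 + E)) := by rw [Nat.mul_left_comm]; exact hbound
    _ < L * ((E + 2) * (K + 1) ^ 2) := Nat.mul_lt_mul_of_pos_left hkey hL
    _ = (E + 2) * (L * (K + 1) ^ 2) := by ring
    _ ≤ (E + 2) * (T.card - 1) := Nat.mul_le_mul_left _ hlow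
  exact lt_irrefl _ this

section Preimages

variable {A B : Type*} [Fintype A] [Nonempty A] [DecidableEq B] {σ : A → List A} {a : A}
  {y : ℕ → A} {φ : A → B}

variable (σ φ) in
def windowOffsets (k : ℕ) (u : List B) (w : List A) : Finset ℕ :=
  (Finset.range (maxLen σ k)).filter fun o =>
    (((morphIter σ k w).drop o).take u.length).map φ = u

theorem IsFixedPointOf.ncard_preimages_le (hy : IsFixedPointOf σ a y) (hprol : Prolongable σ a)
    {u : List B} {K k Bd : ℕ} (hmin : 0 < minLen σ k) (hn : u.length ≤ K * minLen σ k + 1)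
    (hoff : ∀ w, IsFactor y w → (windowOffsets σ φ k u w).card ≤ Bd) :
    {v : List A | IsFactor y v ∧ v.map φ = u}.ncard ≤
      {w : List A | w.length = K + 1 ∧ InLang σ w}.ncard * Bd := by
  classical
  set F := {w : List A | w.length = K + 1 ∧ IsFactor y w}
  have hF : F.Finite := (List.finite_length_eq A (K + 1)).subset fun w hw => hw.1
  have hcover : {v : List A | IsFactor y v ∧ v.map φ = u} ⊆
      ↑(hF.toFinset.biUnion fun w => (windowOffsets σ φ k u w).image fun o =>
        ((morphIter σ k w).drop o).take u.length) := by
    rintro v ⟨⟨i, hi⟩, rfl⟩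
    obtain ⟨j, o, ho, hwin⟩ := hy.exists_window hprol (K := K) hmin (by simpa using hn) i
    simp only [List.length_map, Finset.coe_biUnion, Set.Finite.coe_toFinset, Finset.coe_image,
      Set.mem_iUnion, Set.mem_image, Finset.mem_coe, exists_prop]
    refine ⟨seqWord y j (K + 1), ⟨by simp, j, occursAt_seqWord y j _⟩, o, ?_, ?_⟩
    · simp only [windowOffsets, Finset.mem_filter, Finset.mem_range, List.length_map]
      exact ⟨ho, by rw [← hwin, hi]⟩
    · rw [← hwin, hi]
  calc {v : List A | IsFactor y v ∧ v.map φ = u}.ncard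
      ≤ (hF.toFinset.biUnion fun w => (windowOffsets σ φ k u w).image fun o =>
          ((morphIter σ k w).drop o).take u.length).card := by
        rw [← Set.ncard_coe_finset]
        exact Set.ncard_le_ncard hcover (Finset.finite_toSet _)
    _ ≤ hF.toFinset.card * Bd := Finset.card_biUnion_le_card_mul _ _ _ fun w hw =>
        Finset.card_image_le.trans (hoff w (hF.mem_toFinset.1 hw).2)
    _ ≤ {w : List A | w.length = K + 1 ∧ InLang σ w}.ncard * Bd := by
        rw [← Set.ncard_eq_toFinset_card _ hF]
        exact Nat.mul_le_mul_right _ (Set.ncard_le_ncard (fun w hw => ⟨hw.1, hy.inLang hprol hw.2⟩)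
          ((List.finite_length_eq A (K + 1)).subset fun w hw => hw.1))

theorem IsFixedPointOf.length_le_of_mem_windowOffsets [Finite B] (hy : IsFixedPointOf σ a y)
    (hprol : Prolongable σ a) {K : ℕ} (hK : LinRec K fun t => φ (y t))
    (hnp : ¬ UltPeriodic fun t => φ (y t)) {k : ℕ} {u : List B} {w : List A}
    (hw : IsFactor y w) {o o' : ℕ} (ho : o ∈ windowOffsets σ φ k u w)
    (ho' : o' ∈ windowOffsets σ φ k u w) (hlt : o < o') :
    u.length ≤ K * (o' - o + 1) := by
  rcases Nat.eq_zero_or_pos u.length with hu0 | hupos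
  · simp [hu0]
  obtain ⟨i, hi⟩ := hw
  have hocc := hy.occursAt_morphIter hprol k i w.length
  rw [show seqWord y i w.length = w from hi] at hocc
  have hu : ∀ o ∈ windowOffsets σ φ k u w,
      occursAt (fun t => φ (y t)) u ((morphIter σ k (seqWord y 0 i)).length + o) := by
    intro o ho
    simp only [windowOffsets, Finset.mem_filter] at ho
    have hlen := congrArg List.length ho.2
    simp only [List.length_map, List.length_take, List.length_drop] at hlen
    have := (hocc.take_drop (o := o) (n := u.length) (by omega)).map φ
    rwa [ho.2] at this
  refine hK.length_le_of_occursAt_add hnp (by omega) (hu o ho) ?_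
  rw [Nat.add_assoc, Nat.add_sub_cancel' hlt.le]
  exact hu o' ho'

end Preimages

theorem bounded_preimages_general {A B : Type*} [Fintype A] [Fintype B] [Nonempty A]
    (σ : A → List A) (a : A)
    (hgrow : Growing σ) (hprol : Prolongable σ a)
    (y : ℕ → A) (hy : IsFixedPointOf σ a y)
    (φ : A → B) (x : ℕ → B) (hx : x = fun n => φ (y n))
    (hnp : ¬ UltPeriodic x)
    (K : ℕ) (hK : LinRec K x)
    (Q : ℕ) (hQ : ∀ k, maxLen σ k ≤ Q * minLen σ k) :
    ∀ u : List B, IsFactor x u →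
      {v : List A | IsFactor y v ∧ v.map φ = u}.ncard ≤
        {w : List A | w.length = K + 1 ∧ InLang σ w}.ncard *
          maxLen σ 1 * Q * (K + 1) ^ 2 := by
  classical
  subst hx
  intro u _
  rw [Nat.mul_assoc _ (maxLen σ 1), Nat.mul_assoc]
  rcases le_or_gt u.length (K + 1) with hshort | hlong
  · have hσ := hprol.one_le_maxLen_one
    have hQ1 : 1 ≤ Q := by simpa using hQ 0
    refine hy.ncard_preimages_le hprol (k := 0) (by simp) (by simpa using hshort) fun w _ => ?_
    calc (windowOffsets σ φ 0 u w).card ≤ (Finset.range (maxLen σ 0)).card :=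
          Finset.card_filter_le _ _
      _ = 1 := by simp
      _ ≤ maxLen σ 1 * Q * (K + 1) ^ 2 := Nat.mul_pos (Nat.mul_pos hσ hQ1) (by positivity)
  · obtain ⟨k, hk, hmax⟩ := hgrow.exists_le_minLen_and_maxLen_le hQ (n := u.length) (by omega)
    refine hy.ncard_preimages_le hprol (by omega)
      (hk.trans (Nat.le_mul_of_pos_left _ hK.one_le) |>.trans (Nat.le_succ _)) fun w hw =>
      Finset.card_le_mul_sq_of_separated hlong (fun o ho => ?_) fun o ho o' ho' hlt =>
        hy.length_le_of_mem_windowOffsets hprol hK hnp hw ho ho' hlt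
    exact (Finset.mem_range.1 (Finset.mem_filter.1 ho).1).trans_le hmax

/-- Proposition: let `σ` be a substitution prolongable on `a`, `φ` a coding,
`y = σ^∞(a)`, and suppose `x = φ(y)` is uniformly recurrent and non-periodic with all
letters of `A` occurring in `y`. Then for every factor `u` of `x`, the number of factors
`v` of `y` with `φ(v) = u` is at most `p_σ(K+1)·|σ|·Q_σ·(K+1)²`, where `K` is a linear
recurrence constant of `x`, `p_σ(n)` is the number of length-`n` words of the language of
`σ`, and `Q_σ` satisfies `|σ^k| ≤ Q_σ·⟨σ^k⟩` for all `k`. -/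
theorem bounded_preimages {A B : Type*} [Fintype A] [Fintype B] [Nonempty A]
    (σ : A → List A) (a : A)
    (hgrow : Growing σ) (hprol : Prolongable σ a)
    (y : ℕ → A) (hy : IsFixedPointOf σ a y)
    (φ : A → B) (x : ℕ → B) (hx : x = fun n => φ (y n))
    (hur : UnifRec x) (hnp : ¬ UltPeriodic x)
    (hall : ∀ b : A, ∃ n, y n = b)
    (K : ℕ) (hK : LinRec K x)
    (Q : ℕ) (hQ : ∀ k, maxLen σ k ≤ Q * minLen σ k) :
    ∀ u : List B, IsFactor x u →
      {v : List A | IsFactor y v ∧ v.map φ = u}.ncard ≤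
        {w : List A | w.length = K + 1 ∧ InLang σ w}.ncard *
          maxLen σ 1 * Q * (K + 1) ^ 2 :=
  bounded_preimages_general σ a hgrow hprol y hy φ x hx hnp K hK Q hQ
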